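/- arXiv:2202.02295 — 3 statements merged into one kernel-verified Lean document; each statement's English description precedes it below -/
import Mathlib

section
/- Let A be symmetric positive definite, C_t = (A + t⁻¹)⁻¹, and suppose H is a symmetric matrix with H ⪰ C_t⁻¹ − χ C_t⁻² for some χ ≥ 0 (in the Loewner order). Then Ċ_t H Ċ_t − ½ C̈_t ⪰ (1/t − χ/t²) Ċ_t. -/
open Matrix in
/-- If H ⪰ C_t⁻¹ − χ C_t⁻² in the Loewner (quadratic form) order, where
C_t = (A + t⁻¹I)⁻¹, Ċ_t = t⁻²C_t², C̈_t = −(2/t)A C_t Ċ_t, then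
Ċ_t H Ċ_t − ½C̈_t ⪰ (1/t − χ/t²) Ċ_t. -/
theorem loewner_bound_CdHCd {n : Type*} [Fintype n] [DecidableEq n]
    (A : Matrix n n ℝ) (hAsymm : A.IsSymm) (hApos : A.PosDef)
    (t χ : ℝ) (ht : 0 < t) (hχ : 0 ≤ χ)
    (C Cd Cdd H : Matrix n n ℝ)
    (hC : C = (A + t⁻¹ • 1)⁻¹)
    (hCd : Cd = (t ^ 2)⁻¹ • (C * C))
    (hCdd : Cdd = -(2 / t) • (A * C * Cd))
    (hHsymm : H.IsSymm)
    (hH : ∀ X : n → ℝ, X ⬝ᵥ (C⁻¹ - χ • (C⁻¹ * C⁻¹)).mulVec X ≤ X ⬝ᵥ H.mulVec X) :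
    ∀ X : n → ℝ, (1 / t - χ / t ^ 2) * (X ⬝ᵥ Cd.mulVec X) ≤
      X ⬝ᵥ (Cd * H * Cd - (1 / 2 : ℝ) • Cdd).mulVec X := by
  intro X
  set B := A + t⁻¹ • 1 with hB
  have hBpos : B.PosDef := by
    refine hApos.add_posSemidef ⟨?_, fun x => ?_⟩
    · simp [Matrix.IsHermitian]
    · exact (Matrix.PosSemidef.one.smul (by positivity : (0:ℝ) ≤ t⁻¹)).2 x
  have hBunit : IsUnit B := hBpos.isUnit
  have hBunitDet : IsUnit B.det := (Matrix.isUnit_iff_isUnit_det B).mp hBunit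
  have hBC : B * C = 1 := by rw [hC]; exact Matrix.mul_nonsing_inv B hBunitDet
  have hCB : C * B = 1 := by rw [hC]; exact Matrix.nonsing_inv_mul B hBunitDet
  have hCinv : C⁻¹ = B := by rw [hC, Matrix.nonsing_inv_nonsing_inv B hBunitDet]
  have hBsymm : Bᵀ = B := by
    rw [hB, Matrix.transpose_add, hAsymm.eq, Matrix.transpose_smul, Matrix.transpose_one]
  have hCsymm : Cᵀ = C := by
    rw [hC, Matrix.transpose_nonsing_inv, hBsymm]
  have hCdT : Cdᵀ = Cd := by
    rw [hCd, Matrix.transpose_smul, Matrix.transpose_mul, hCsymm]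
  have hBCC : B * (C * C) = C := by rw [← Matrix.mul_assoc, hBC, Matrix.one_mul]
  have hBBCC : B * (B * (C * C)) = 1 := by rw [hBCC, hBC]
  have hACCC : A * (C * (C * C)) = C * C - t⁻¹ • (C * (C * C)) := by
    have hb : B * (C * (C * C)) = C * C := by
      rw [← Matrix.mul_assoc, hBC, Matrix.one_mul]
    rw [hB, Matrix.add_mul, Matrix.smul_mul, Matrix.one_mul] at hb
    exact eq_sub_of_add_eq hb
  have key : Cd * (C⁻¹ - χ • (C⁻¹ * C⁻¹)) * Cd - (1 / 2 : ℝ) • Cdd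
      = (1 / t - χ / t ^ 2) • Cd := by
    rw [hCinv, hCdd, hCd]
    simp only [Matrix.mul_sub, Matrix.sub_mul, Matrix.smul_mul, Matrix.mul_smul,
      smul_sub, smul_smul, Matrix.mul_assoc, hBC, hBCC, hBBCC, Matrix.mul_one, hACCC,
      neg_smul, neg_neg, sub_neg_eq_add]
    match_scalars <;> field_simp <;> ring
  have hsub : ∀ (M N : Matrix n n ℝ), X ⬝ᵥ (M - N).mulVec X
      = X ⬝ᵥ M.mulVec X - X ⬝ᵥ N.mulVec X := by
    intro M N
    rw [Matrix.sub_mulVec, dotProduct_sub]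
  have hrw : ∀ (M : Matrix n n ℝ), X ⬝ᵥ (Cd * M * Cd).mulVec X
      = (Cd.mulVec X) ⬝ᵥ M.mulVec (Cd.mulVec X) := by
    intro M
    rw [← Matrix.mulVec_mulVec, ← Matrix.mulVec_mulVec,
      Matrix.dotProduct_mulVec X Cd, ← Matrix.mulVec_transpose, hCdT]
  have hquad : X ⬝ᵥ (Cd * (C⁻¹ - χ • (C⁻¹ * C⁻¹)) * Cd).mulVec X
      ≤ X ⬝ᵥ (Cd * H * Cd).mulVec X := by
    rw [hrw, hrw]; exact hH (Cd.mulVec X)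
  calc (1 / t - χ / t ^ 2) * (X ⬝ᵥ Cd.mulVec X)
      = X ⬝ᵥ ((1 / t - χ / t ^ 2) • Cd).mulVec X := by
        rw [Matrix.smul_mulVec, dotProduct_smul, smul_eq_mul]
    _ = X ⬝ᵥ (Cd * (C⁻¹ - χ • (C⁻¹ * C⁻¹)) * Cd).mulVec X
        - X ⬝ᵥ ((1 / 2 : ℝ) • Cdd).mulVec X := by rw [← hsub, key]
    _ ≤ X ⬝ᵥ (Cd * H * Cd).mulVec X - X ⬝ᵥ ((1 / 2 : ℝ) • Cdd).mulVec X := by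
        linarith [hquad]
    _ = X ⬝ᵥ (Cd * H * Cd - (1 / 2 : ℝ) • Cdd).mulVec X := by rw [hsub]
end

section
/- Let χ ≥ 0, ν ≤ 0, and define κ_t = ∫₀^t κ̇_s ds where κ̇_s ≥ ν/(1+sν) for s ≤ t₁ := 1/(2|ν|+1), and κ̇_s ≥ 1/s − χ/s² for s > t₁. Then for all t > 0, ∫₀^∞ e^{−2κ_t} dt ≤ e²/(2|ν|+1) + (2|ν|+1)³ e^{2+2(2|ν|+1)χ}. -/
open MeasureTheory Set Real

/-- If κ_t = ∫₀^t κ̇_s ds with κ̇_s ≥ ν/(1+sν) for 0 < s ≤ 1/(2|ν|+1) and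
κ̇_s ≥ 1/s − χ/s² for s > 1/(2|ν|+1) (ν ≤ 0, χ ≥ 0), then
∫₀^∞ e^{−2κ_t} dt ≤ e²/(2|ν|+1) + (2|ν|+1)³ e^{2+2(2|ν|+1)χ}. -/
theorem integral_exp_neg_two_kappa_bound (ν χ : ℝ) (hν : ν ≤ 0) (hχ : 0 ≤ χ)
    (κ' : ℝ → ℝ)
    (hint : ∀ t > (0 : ℝ), IntervalIntegrable κ' MeasureTheory.volume 0 t)
    (h1 : ∀ s : ℝ, 0 < s → s ≤ 1 / (2 * |ν| + 1) → ν / (1 + s * ν) ≤ κ' s)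
    (h2 : ∀ s : ℝ, 1 / (2 * |ν| + 1) < s → 1 / s - χ / s ^ 2 ≤ κ' s)
    (κ : ℝ → ℝ) (hκ : ∀ t, κ t = ∫ s in (0 : ℝ)..t, κ' s) :
    ∫ t in Set.Ioi (0 : ℝ), Real.exp (-2 * κ t) ≤
      Real.exp 2 / (2 * |ν| + 1) +
        (2 * |ν| + 1) ^ 3 * Real.exp (2 + 2 * (2 * |ν| + 1) * χ) := by
  set a : ℝ := 2 * |ν| + 1 with ha_def
  have ha1 : (1:ℝ) ≤ a := by have := abs_nonneg ν; simp only [ha_def]; linarith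
  have ha : (0:ℝ) < a := lt_of_lt_of_le one_pos ha1
  have ht₁0 : (0:ℝ) < 1 / a := by positivity
  have haν : |ν| = -ν := abs_of_nonpos hν
  -- a.e. s ≠ c, for excluding endpoints
  have hne : ∀ c : ℝ, ∀ᵐ s : ℝ, s ≠ c := by
    intro c
    rw [MeasureTheory.ae_iff]
    simp only [ne_eq, not_not, Set.setOf_eq_eq_singleton]
    exact Real.volume_singleton
  -- Step A : lower bound on κ t for t ≤ 1/a
  have hA : ∀ t : ℝ, 0 < t → t ≤ 1 / a → -1 ≤ κ t := by
    intro t ht htle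
    have hat : a * t ≤ 1 := by
      have := mul_le_mul_of_nonneg_left htle ha.le
      rwa [mul_one_div_cancel ha.ne'] at this
    have hmono : ∫ _s in (0:ℝ)..t, (-(2*|ν|)) ≤ ∫ s in (0:ℝ)..t, κ' s := by
      apply intervalIntegral.integral_mono_ae_restrict ht.le intervalIntegrable_const
        (hint t ht)
      filter_upwards [ae_restrict_mem measurableSet_Icc,
        ae_restrict_of_ae (hne 0)] with s hs hs0
      have hspos : 0 < s := lt_of_le_of_ne hs.1 (Ne.symm hs0)
      have hsle : s ≤ 1 / a := hs.2.trans htle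
      have has : a * s ≤ 1 := by
        have := mul_le_mul_of_nonneg_left hsle ha.le
        rwa [mul_one_div_cancel ha.ne'] at this
      refine le_trans ?_ (h1 s hspos hsle)
      have hdpos : (0:ℝ) < 1 + s * ν := by
        rw [ha_def, haν] at has; nlinarith [hspos.le]
      have h2ν : (2:ℝ) * ν ≤ ν / (1 + s * ν) := by
        rw [le_div_iff₀ hdpos]
        rw [ha_def, haν] at has
        nlinarith [hspos.le, sq_nonneg ν]
      rw [haν]; linarith
    have hval : ∫ _s in (0:ℝ)..t, (-(2*|ν|)) = t * (-(2*|ν|)) := by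
      simp [intervalIntegral.integral_const, smul_eq_mul]; ring
    rw [hκ]
    rw [hval] at hmono
    rw [ha_def] at hat
    nlinarith [abs_nonneg ν]
  -- Step B : lower bound on κ t for t > 1/a
  have hB : ∀ t : ℝ, 1 / a < t → -1 + (Real.log (a * t) - a * χ) ≤ κ t := by
    intro t ht
    have ht0 : 0 < t := lt_trans ht₁0 ht
    have hsub : Set.uIcc (1/a) t ⊆ Set.uIcc 0 t := by
      rw [Set.uIcc_of_le ht.le, Set.uIcc_of_le ht0.le]
      exact Set.Icc_subset_Icc ht₁0.le le_rfl
    have hi1 : IntervalIntegrable κ' volume 0 (1/a) := hint _ ht₁0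
    have hi2 : IntervalIntegrable κ' volume (1/a) t := (hint t ht0).mono_set hsub
    have hsplit : κ t = (∫ s in (0:ℝ)..(1/a), κ' s) + ∫ s in (1/a:ℝ)..t, κ' s := by
      rw [hκ, ← intervalIntegral.integral_add_adjacent_intervals hi1 hi2]
    have hcont : IntervalIntegrable (fun s => 1/s - χ/s^2) volume (1/a) t := by
      apply ContinuousOn.intervalIntegrable
      have hpos : ∀ x ∈ Set.uIcc (1/a) t, x ≠ 0 := by
        intro x hx
        rw [Set.uIcc_of_le ht.le] at hx
        exact (lt_of_lt_of_le ht₁0 hx.1).ne'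
      apply ContinuousOn.sub
      · exact continuousOn_const.div continuousOn_id hpos
      · exact continuousOn_const.div (continuousOn_pow 2)
          (fun x hx => pow_ne_zero 2 (hpos x hx))
    have hderiv : ∀ s ∈ Set.uIcc (1/a) t,
        HasDerivAt (fun s => Real.log s + χ * s⁻¹) (1/s - χ/s^2) s := by
      intro s hs
      rw [Set.uIcc_of_le ht.le] at hs
      have hs0 : 0 < s := lt_of_lt_of_le ht₁0 hs.1
      have h₁ := Real.hasDerivAt_log hs0.ne'
      have h₂ := (hasDerivAt_inv hs0.ne').const_mul χ
      refine (h₁.add h₂).congr_deriv ?_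
      rw [one_div]
      ring
    have heq : ∫ s in (1/a:ℝ)..t, (1/s - χ/s^2)
        = (Real.log t + χ * t⁻¹) - (Real.log (1/a) + χ * (1/a)⁻¹) :=
      intervalIntegral.integral_eq_sub_of_hasDerivAt hderiv hcont
    have hmono2 : ∫ s in (1/a:ℝ)..t, (1/s - χ/s^2) ≤ ∫ s in (1/a:ℝ)..t, κ' s := by
      apply intervalIntegral.integral_mono_ae_restrict ht.le hcont hi2
      filter_upwards [ae_restrict_mem measurableSet_Icc,
        ae_restrict_of_ae (hne (1/a))] with s hs hs1
      exact h2 s (lt_of_le_of_ne hs.1 (Ne.symm hs1))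
    have hlogs : Real.log (a * t) = Real.log a + Real.log t :=
      Real.log_mul ha.ne' ht0.ne'
    have hlog1a : Real.log (1/a) = - Real.log a := by
      rw [one_div, Real.log_inv]
    have hχt : 0 ≤ χ * t⁻¹ := by positivity
    have hinv : χ * (1/a)⁻¹ = χ * a := by rw [one_div, inv_inv]
    have hA1 : -1 ≤ ∫ s in (0:ℝ)..(1/a), κ' s := by
      have := hA (1/a) ht₁0 le_rfl
      rwa [hκ] at this
    rw [hsplit]
    rw [heq, hlog1a, hinv] at hmono2
    rw [hlogs]
    linarith
  -- the dominating function
  set Cb : ℝ := Real.exp (2 + 2 * a * χ) with hCb_def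
  have hCbpos : 0 < Cb := Real.exp_pos _
  set g : ℝ → ℝ := fun t => if t ≤ 1/a then Real.exp 2 else (Cb / a^2) * t ^ (-2:ℝ)
    with hg_def
  have heq1 : Set.EqOn g (fun _ => Real.exp 2) (Set.Ioc 0 (1/a)) :=
    fun x hx => if_pos hx.2
  have heq2 : Set.EqOn g (fun t => (Cb / a^2) * t ^ (-2:ℝ)) (Set.Ioi (1/a)) :=
    fun x hx => if_neg (not_le.2 hx)
  have hg1 : IntegrableOn g (Set.Ioc 0 (1/a)) := by
    apply MeasureTheory.IntegrableOn.congr_fun _ heq1.symm measurableSet_Ioc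
    refine MeasureTheory.integrableOn_const ?_
    rw [Real.volume_Ioc]
    exact ENNReal.ofReal_ne_top
  have hg2 : IntegrableOn g (Set.Ioi (1/a)) := by
    exact MeasureTheory.IntegrableOn.congr_fun
      ((integrableOn_Ioi_rpow_of_lt (by norm_num : (-2:ℝ) < -1) ht₁0).const_mul
        (Cb / a^2)) heq2.symm measurableSet_Ioi
  have hgint : IntegrableOn g (Set.Ioi 0) := by
    rw [← Set.Ioc_union_Ioi_eq_Ioi ht₁0.le]
    exact hg1.union hg2
  have hgval : ∫ t in Set.Ioi (0:ℝ), g t = Real.exp 2 * (1/a) + (Cb / a^2) * a := by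
    rw [← Set.Ioc_union_Ioi_eq_Ioi ht₁0.le,
      MeasureTheory.setIntegral_union (Set.Ioc_disjoint_Ioi le_rfl)
        measurableSet_Ioi hg1 hg2]
    congr 1
    · rw [MeasureTheory.setIntegral_congr_fun measurableSet_Ioc heq1,
        MeasureTheory.setIntegral_const, Real.volume_real_Ioc_of_le ht₁0.le, smul_eq_mul]
      ring
    · rw [MeasureTheory.setIntegral_congr_fun measurableSet_Ioi heq2,
        MeasureTheory.integral_const_mul, integral_Ioi_rpow_of_lt (by norm_num) ht₁0]
      congr 1
      rw [show (-2:ℝ)+1 = -1 by norm_num, Real.rpow_neg_one, one_div, inv_inv]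
      field_simp
  have hle : ∫ t in Set.Ioi (0:ℝ), Real.exp (-2 * κ t) ≤ ∫ t in Set.Ioi (0:ℝ), g t := by
    apply MeasureTheory.integral_mono_of_nonneg
      (Filter.Eventually.of_forall (fun t => (Real.exp_pos _).le)) hgint
    filter_upwards [ae_restrict_mem measurableSet_Ioi] with t ht
    rcases le_or_gt t (1/a) with hc | hc
    · have := hA t ht hc
      rw [hg_def]; simp only [if_pos hc]
      apply Real.exp_le_exp.mpr; linarith
    · have hκt := hB t hc
      have ht0 : (0:ℝ) < t := ht
      rw [hg_def]; simp only [if_neg (not_le.2 hc)]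
      have : Real.exp (-2 * κ t) ≤ Real.exp (2 + 2*a*χ - 2 * Real.log (a*t)) := by
        apply Real.exp_le_exp.mpr; linarith
      refine this.trans ?_
      have hat : (0:ℝ) < a * t := by positivity
      have hrw : Real.exp (2 * Real.log (a * t)) = (a*t) ^ (2:ℝ) := by
        rw [Real.rpow_def_of_pos hat, mul_comm]
      rw [Real.exp_sub, hrw, div_eq_mul_inv, ← Real.rpow_neg hat.le,
        Real.mul_rpow ha.le ht0.le]
      have haa : a ^ (-2:ℝ) = (a^2)⁻¹ := by
        rw [Real.rpow_neg ha.le, Real.rpow_two]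
      rw [haa, hCb_def]
      exact le_of_eq (by ring)
  refine hle.trans ?_
  rw [hgval]
  have h1e : Real.exp 2 * (1/a) = Real.exp 2 / a := by ring
  have h2e : (Cb / a^2) * a ≤ a^3 * Cb := by
    have e1 : (Cb / a^2) * a = Cb / a := by field_simp
    have e2 : Cb / a ≤ Cb := div_le_self hCbpos.le ha1
    have e3 : Cb ≤ a^3 * Cb := le_mul_of_one_le_left hCbpos.le (by nlinarith)
    calc (Cb / a^2) * a = Cb / a := e1
      _ ≤ Cb := e2
      _ ≤ a^3 * Cb := e3
  rw [h1e]
  linarith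
end

section
/- For every k ∈ ℝ³, the integral I(k) = ∫_{ℝ³} (1+‖q‖²)⁻¹ (1+‖k−q‖²)⁻¹ dq satisfies I(k) ≤ c/(1+‖k‖) for a universal constant c. -/
open MeasureTheory Metric Set Module

noncomputable def bubblePsi (K y : ℝ) : ℝ :=
  if y ≤ K then 8 / K ^ 2 * (max 1 (y ^ 2))⁻¹ else (y ^ 2 * y ^ 2)⁻¹

lemma bubblePsi_nonneg {K : ℝ} (hK : 1 ≤ K) (y : ℝ) : 0 ≤ bubblePsi K y := by
  unfold bubblePsi
  split <;> positivity

lemma bubblePsi_measurable (K : ℝ) : Measurable (bubblePsi K) := by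
  unfold bubblePsi
  exact Measurable.ite (measurableSet_le measurable_id measurable_const)
    (by fun_prop) (by fun_prop)

lemma bubblePsi_le {K y : ℝ} (hK : 1 ≤ K) (hy : 0 ≤ y) :
    bubblePsi K y ≤ 128 * (1 + y) ^ (-4 : ℝ) := by
  have h1 : (0:ℝ) < 1 + y := by linarith
  have hrw : (1 + y) ^ (-4 : ℝ) = ((1+y)^2 * (1+y)^2)⁻¹ := by
    rw [show (-4 : ℝ) = -(4 : ℕ) by norm_num, Real.rpow_neg h1.le, Real.rpow_natCast]
    ring_nf
  rw [hrw]
  have hmaxpos : (0:ℝ) < max 1 (y^2) := lt_of_lt_of_le one_pos (le_max_left _ _)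
  have hm : (max 1 (y^2))⁻¹ ≤ 4 * ((1+y)^2)⁻¹ := by
    have hmx : (1+y)^2 ≤ 4 * max 1 (y^2) := by
      rcases le_total y 1 with h | h
      · nlinarith [le_max_left (1:ℝ) (y^2)]
      · nlinarith [le_max_right (1:ℝ) (y^2)]
    have := inv_anti₀ (show (0:ℝ) < (1+y)^2/4 by positivity)
      (by linarith : (1+y)^2/4 ≤ max 1 (y^2))
    rw [inv_div] at this
    calc (max 1 (y^2))⁻¹ ≤ 4 / (1+y)^2 := this
      _ = 4 * ((1+y)^2)⁻¹ := by rw [div_eq_mul_inv]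
  have hstep : bubblePsi K y ≤ 8 * ((max 1 (y^2))⁻¹ * (max 1 (y^2))⁻¹) := by
    unfold bubblePsi
    split
    case isTrue h =>
      have hmK : max 1 (y^2) ≤ K^2 := by
        apply max_le (by nlinarith) (by nlinarith)
      have : 8 / K^2 ≤ 8 * (max 1 (y^2))⁻¹ := by
        rw [div_eq_mul_inv]
        exact mul_le_mul_of_nonneg_left (inv_anti₀ hmaxpos hmK) (by norm_num)
      calc 8 / K^2 * (max 1 (y^2))⁻¹ ≤ 8 * (max 1 (y^2))⁻¹ * (max 1 (y^2))⁻¹ :=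
            mul_le_mul_of_nonneg_right this (by positivity)
        _ = 8 * ((max 1 (y^2))⁻¹ * (max 1 (y^2))⁻¹) := by ring
    case isFalse h =>
      have hy1 : 1 < y := by linarith [not_le.mp h]
      have : max 1 (y^2) = y^2 := max_eq_right (by nlinarith)
      rw [this, mul_inv]
      nlinarith [sq_nonneg ((y^2)⁻¹)]
  calc bubblePsi K y ≤ 8 * ((max 1 (y^2))⁻¹ * (max 1 (y^2))⁻¹) := hstep
    _ ≤ 8 * ((4 * ((1+y)^2)⁻¹) * (4 * ((1+y)^2)⁻¹)) := by
        apply mul_le_mul_of_nonneg_left _ (by norm_num)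
        exact mul_le_mul hm hm (by positivity) (by positivity)
    _ = 128 * ((1+y)^2 * (1+y)^2)⁻¹ := by rw [mul_inv]; ring

lemma bubble_key {K a b : ℝ} (hK : 1 ≤ K) (ha : 0 ≤ a) (hab : a ≤ b)
    (hKab : K ≤ 1 + a + b) :
    (1 + a ^ 2)⁻¹ * (1 + b ^ 2)⁻¹ ≤ bubblePsi K a := by
  have hb : 0 ≤ b := ha.trans hab
  have hbK : (1 + b ^ 2)⁻¹ ≤ 8 / K ^ 2 := by
    have hK2b : K ≤ 1 + 2 * b := by linarith
    have h2 : K ^ 2 / 8 ≤ 1 + b ^ 2 := by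
      nlinarith [mul_le_mul hK2b hK2b (by linarith : (0:ℝ) ≤ K) (by linarith : (0:ℝ) ≤ 1 + 2*b),
        sq_nonneg (b - 1)]
    have := inv_anti₀ (show (0:ℝ) < K^2/8 by positivity) h2
    rwa [inv_div] at this
  have hba : (1 + b ^ 2)⁻¹ ≤ (1 + a ^ 2)⁻¹ :=
    inv_anti₀ (by positivity) (by nlinarith)
  unfold bubblePsi
  split
  case isTrue h =>
    have h1 : (1 + a ^ 2)⁻¹ ≤ (max 1 (a ^ 2))⁻¹ := by
      apply inv_anti₀ (lt_of_lt_of_le one_pos (le_max_left _ _))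
      apply max_le (by nlinarith) (by nlinarith)
    calc (1 + a ^ 2)⁻¹ * (1 + b ^ 2)⁻¹ ≤ (max 1 (a^2))⁻¹ * (8 / K^2) :=
          mul_le_mul h1 hbK (by positivity) (by positivity)
      _ = 8 / K ^ 2 * (max 1 (a ^ 2))⁻¹ := by ring
  case isFalse h =>
    have haK : K < a := not_le.mp h
    have ha1 : 1 < a := lt_of_le_of_lt hK haK
    have h2 : (1 + a ^ 2)⁻¹ ≤ (a ^ 2)⁻¹ := inv_anti₀ (by positivity) (by nlinarith)
    calc (1 + a ^ 2)⁻¹ * (1 + b ^ 2)⁻¹ ≤ (a^2)⁻¹ * (a^2)⁻¹ :=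
          mul_le_mul h2 (hba.trans h2) (by positivity) (by positivity)
      _ = (a ^ 2 * a ^ 2)⁻¹ := (mul_inv _ _).symm

-- pointwise bound in E
lemma bubble_pointwise {k q : EuclideanSpace ℝ (Fin 3)} :
    (1 + ‖q‖ ^ 2)⁻¹ * (1 + ‖k - q‖ ^ 2)⁻¹ ≤
      bubblePsi (1 + ‖k‖) ‖q‖ + bubblePsi (1 + ‖k‖) ‖k - q‖ := by
  have hK : (1:ℝ) ≤ 1 + ‖k‖ := le_add_of_nonneg_right (norm_nonneg k)
  have hKab : 1 + ‖k‖ ≤ 1 + ‖q‖ + ‖k - q‖ := by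
    have : ‖k‖ ≤ ‖q‖ + ‖k - q‖ := by
      calc ‖k‖ = ‖q + (k - q)‖ := by rw [add_sub_cancel]
        _ ≤ ‖q‖ + ‖k - q‖ := norm_add_le _ _
    linarith
  have h1 : (0:ℝ) ≤ bubblePsi (1 + ‖k‖) ‖q‖ := by
    unfold bubblePsi; split <;> positivity
  have h2 : (0:ℝ) ≤ bubblePsi (1 + ‖k‖) ‖k - q‖ := by
    unfold bubblePsi; split <;> positivity
  rcases le_total ‖q‖ ‖k - q‖ with h | h
  · calc (1 + ‖q‖ ^ 2)⁻¹ * (1 + ‖k - q‖ ^ 2)⁻¹ ≤ bubblePsi (1 + ‖k‖) ‖q‖ :=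
        bubble_key hK (norm_nonneg _) h hKab
      _ ≤ _ := le_add_of_nonneg_right h2
  · calc (1 + ‖q‖ ^ 2)⁻¹ * (1 + ‖k - q‖ ^ 2)⁻¹
        = (1 + ‖k - q‖ ^ 2)⁻¹ * (1 + ‖q‖ ^ 2)⁻¹ := mul_comm _ _
      _ ≤ bubblePsi (1 + ‖k‖) ‖k - q‖ :=
        bubble_key hK (norm_nonneg _) h (by linarith)
      _ ≤ _ := le_add_of_nonneg_left h1

lemma bubblePsi_norm_integrable {K : ℝ} (hK : 1 ≤ K) :
    Integrable (fun q : EuclideanSpace ℝ (Fin 3) => bubblePsi K ‖q‖) := by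
  have hnr : ((finrank ℝ (EuclideanSpace ℝ (Fin 3)) : ℝ)) < 4 := by
    rw [finrank_euclideanSpace_fin]; norm_num
  refine ((integrable_one_add_norm hnr).const_mul 128).mono'
    (((bubblePsi_measurable K).comp measurable_norm).aestronglyMeasurable) ?_
  filter_upwards with q
  rw [Real.norm_of_nonneg (bubblePsi_nonneg hK _)]
  exact bubblePsi_le hK (norm_nonneg q)

lemma bubblePsi_radial {K : ℝ} (hK : 1 ≤ K) :
    ∫ y in Ioi (0:ℝ), y ^ 2 * bubblePsi K y ≤ 9 / K := by
  have hKpos : (0:ℝ) < K := lt_of_lt_of_le one_pos hK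
  have hgm : Measurable fun y : ℝ => y ^ 2 * bubblePsi K y :=
    (measurable_id.pow_const 2).mul (bubblePsi_measurable K)
  -- piece on (0, K]
  have hbd : ∀ y ∈ Ioc (0:ℝ) K, y ^ 2 * bubblePsi K y ≤ 8 / K ^ 2 := by
    intro y hy
    have hmaxpos : (0:ℝ) < max 1 (y^2) := lt_of_lt_of_le one_pos (le_max_left _ _)
    have hm : y ^ 2 * (max 1 (y ^ 2))⁻¹ ≤ 1 :=
      calc y ^ 2 * (max 1 (y ^ 2))⁻¹
          ≤ (max 1 (y ^ 2)) * (max 1 (y ^ 2))⁻¹ :=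
            mul_le_mul_of_nonneg_right (le_max_right _ _) (by positivity)
        _ = 1 := mul_inv_cancel₀ (ne_of_gt hmaxpos)
    unfold bubblePsi
    rw [if_pos hy.2]
    calc y ^ 2 * (8 / K ^ 2 * (max 1 (y ^ 2))⁻¹)
        = 8 / K ^ 2 * (y ^ 2 * (max 1 (y ^ 2))⁻¹) := by ring
      _ ≤ 8 / K ^ 2 * 1 := mul_le_mul_of_nonneg_left hm (by positivity)
      _ = 8 / K ^ 2 := mul_one _
  have hconst : IntegrableOn (fun _ : ℝ => (8 / K ^ 2 : ℝ)) (Ioc 0 K) :=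
    integrableOn_const measure_Ioc_lt_top.ne
  have hIoc : IntegrableOn (fun y : ℝ => y ^ 2 * bubblePsi K y) (Ioc 0 K) := by
    refine hconst.mono' hgm.aestronglyMeasurable.restrict ?_
    filter_upwards [ae_restrict_mem measurableSet_Ioc] with y hy
    rw [Real.norm_of_nonneg (by
      exact mul_nonneg (by positivity) (bubblePsi_nonneg hK y))]
    exact hbd y hy
  have hIoc_val : ∫ y in Ioc (0:ℝ) K, y ^ 2 * bubblePsi K y ≤ 8 / K := by
    calc ∫ y in Ioc (0:ℝ) K, y ^ 2 * bubblePsi K y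
        ≤ ∫ _ in Ioc (0:ℝ) K, (8 / K ^ 2 : ℝ) :=
          setIntegral_mono_on hIoc hconst measurableSet_Ioc hbd
      _ = (volume (Ioc (0:ℝ) K)).toReal * (8 / K ^ 2) := by
          rw [setIntegral_const]; rfl
      _ = K * (8 / K ^ 2) := by
          rw [Real.volume_Ioc, sub_zero, ENNReal.toReal_ofReal hKpos.le]
      _ = 8 / K := by field_simp
  -- piece on (K, ∞)
  have heq : EqOn (fun y : ℝ => y ^ (-2 : ℝ)) (fun y : ℝ => y ^ 2 * bubblePsi K y)
      (Ioi K) := by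
    intro y hy
    have hyK : K < y := hy
    have hy0 : (0:ℝ) < y := hKpos.trans hyK
    show y ^ (-2 : ℝ) = y ^ 2 * bubblePsi K y
    unfold bubblePsi
    rw [if_neg (not_le.mpr hyK)]
    rw [show (-2:ℝ) = -(2:ℕ) by norm_num, Real.rpow_neg hy0.le, Real.rpow_natCast]
    field_simp
  have hIoi : IntegrableOn (fun y : ℝ => y ^ 2 * bubblePsi K y) (Ioi K) :=
    (integrableOn_Ioi_rpow_of_lt (by norm_num) hKpos).congr_fun heq measurableSet_Ioi
  have hIoi_val : ∫ y in Ioi K, y ^ 2 * bubblePsi K y ≤ 1 / K := by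
    rw [← setIntegral_congr_fun measurableSet_Ioi heq,
      integral_Ioi_rpow_of_lt (by norm_num) hKpos]
    rw [show (-2:ℝ) + 1 = -1 by norm_num, Real.rpow_neg_one]
    rw [one_div]
    norm_num
  calc ∫ y in Ioi (0:ℝ), y ^ 2 * bubblePsi K y
      = (∫ y in Ioc (0:ℝ) K, y ^ 2 * bubblePsi K y)
        + ∫ y in Ioi K, y ^ 2 * bubblePsi K y := by
        rw [← setIntegral_union (Ioc_disjoint_Ioi le_rfl) measurableSet_Ioi hIoc hIoi,
          Ioc_union_Ioi_eq_Ioi hKpos.le]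
    _ ≤ 8 / K + 1 / K := add_le_add hIoc_val hIoi_val
    _ = 9 / K := by ring

lemma bubblePsi_int_le {K : ℝ} (hK : 1 ≤ K) :
    ∫ q : EuclideanSpace ℝ (Fin 3), bubblePsi K ‖q‖
      ≤ 27 * (volume (ball (0 : EuclideanSpace ℝ (Fin 3)) 1)).toReal / K := by
  have hV : (0:ℝ) ≤ (volume (ball (0 : EuclideanSpace ℝ (Fin 3)) 1)).toReal :=
    ENNReal.toReal_nonneg
  rw [integral_fun_norm_addHaar volume (bubblePsi K)]
  rw [finrank_euclideanSpace_fin]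
  simp only [smul_eq_mul, nsmul_eq_mul]
  calc (3:ℝ) * ((volume (ball (0 : EuclideanSpace ℝ (Fin 3)) 1)).toReal
        * ∫ y in Ioi (0:ℝ), y ^ (3-1) * bubblePsi K y)
      ≤ (3:ℝ) * ((volume (ball (0 : EuclideanSpace ℝ (Fin 3)) 1)).toReal * (9 / K)) := by
        apply mul_le_mul_of_nonneg_left _ (by norm_num)
        exact mul_le_mul_of_nonneg_left (bubblePsi_radial hK) hV
    _ = 27 * (volume (ball (0 : EuclideanSpace ℝ (Fin 3)) 1)).toReal / K := by ring

/-- For all k ∈ ℝ³, I(k) = ∫ (1+‖q‖²)⁻¹(1+‖k−q‖²)⁻¹ dq ≤ c/(1+‖k‖)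
for a universal constant c. -/
theorem bubble_decay_bound_R3 :
    ∃ c > (0 : ℝ), ∀ k : EuclideanSpace ℝ (Fin 3),
      (∫ q : EuclideanSpace ℝ (Fin 3),
        (1 + ‖q‖ ^ 2)⁻¹ * (1 + ‖k - q‖ ^ 2)⁻¹) ≤ c / (1 + ‖k‖) := by
  set V : ℝ := (volume (ball (0 : EuclideanSpace ℝ (Fin 3)) 1)).toReal with hV
  have hVpos : 0 < V :=
    ENNReal.toReal_pos (measure_ball_pos volume _ one_pos).ne' measure_ball_lt_top.ne
  refine ⟨54 * V, by positivity, fun k => ?_⟩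
  set K : ℝ := 1 + ‖k‖ with hKdef
  have hK : (1:ℝ) ≤ K := le_add_of_nonneg_right (norm_nonneg k)
  have hKpos : (0:ℝ) < K := lt_of_lt_of_le one_pos hK
  have hint := bubblePsi_norm_integrable hK
  have hint2 : Integrable (fun q : EuclideanSpace ℝ (Fin 3) => bubblePsi K ‖k - q‖) :=
    hint.comp_sub_left k
  have hmono : (∫ q : EuclideanSpace ℝ (Fin 3),
      (1 + ‖q‖ ^ 2)⁻¹ * (1 + ‖k - q‖ ^ 2)⁻¹)
      ≤ ∫ q : EuclideanSpace ℝ (Fin 3), (bubblePsi K ‖q‖ + bubblePsi K ‖k - q‖) := by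
    apply integral_mono_of_nonneg
    · filter_upwards with q; positivity
    · exact hint.add hint2
    · filter_upwards with q; exact bubble_pointwise
  have hsplit : (∫ q : EuclideanSpace ℝ (Fin 3),
      (bubblePsi K ‖q‖ + bubblePsi K ‖k - q‖))
      = (∫ q : EuclideanSpace ℝ (Fin 3), bubblePsi K ‖q‖)
        + ∫ q : EuclideanSpace ℝ (Fin 3), bubblePsi K ‖k - q‖ :=
    integral_add hint hint2
  have hrefl : (∫ q : EuclideanSpace ℝ (Fin 3), bubblePsi K ‖k - q‖)
      = ∫ q : EuclideanSpace ℝ (Fin 3), bubblePsi K ‖q‖ :=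
    integral_sub_left_eq_self (fun q => bubblePsi K ‖q‖) volume k
  calc (∫ q : EuclideanSpace ℝ (Fin 3), (1 + ‖q‖ ^ 2)⁻¹ * (1 + ‖k - q‖ ^ 2)⁻¹)
      ≤ ∫ q : EuclideanSpace ℝ (Fin 3), (bubblePsi K ‖q‖ + bubblePsi K ‖k - q‖) := hmono
    _ = 2 * ∫ q : EuclideanSpace ℝ (Fin 3), bubblePsi K ‖q‖ := by
        rw [hsplit, hrefl]; ring
    _ ≤ 2 * (27 * V / K) := by
        have h1 := bubblePsi_int_le hK
        linarith [h1]
    _ = 54 * V / K := by ring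
end
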